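/- Let K be a commutative ring, S = K[x_1,…,x_n], and φ: S → S a flat K-algebra homomorphism with φ(x_i) = s_i·x_i for elements s_i ∈ S. Then the top differential ∂_{n+1}: FK_{n+1} → FK_n of the φ-Koszul chain complex FK_•(x_1,…,x_n) is injective; equivalently, H_{n+1}(FK_•(x_1,…,x_n)) = 0. -/

import Mathlib

/-!
Only one basis element of `FK_{n+1}` exists, the full wedge `e_1 ∧ ⋯ ∧ e_n ∧ u`, and the
component of its image along `e_1 ∧ ⋯ ∧ e_n` is `±(Θ - s_1⋯s_n)`. So `∂_{n+1}(b) = 0` forces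
`b (Θ - s_1⋯s_n) = 0`, and `Θ - c` is not a right zero divisor in `S[Θ;φ]`: writing
`b = ∑ a_i Θ^i` with top coefficient `a_d ≠ 0`, the coefficient of `Θ^{d+1}` in
`b (Θ - c)` is `a_d`.
-/

/-- The left skew polynomial ring `A[Θ;φ]`. -/
structure LeftSkewPolynomialRing (A : Type*) [CommRing A] (φ : A →+* A)
    (B : Type*) [Ring B] where
  ι : A →+* B
  θ : B
  theta_mul : ∀ a : A, θ * ι a = ι (φ a) * θ
  basis : Function.Bijective fun f : ℕ →₀ A => f.sum fun i a => ι a * θ ^ i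

noncomputable section

namespace PhiKoszul

variable {S : Type*} [CommRing S] {φ : S →+* S} {B : Type*} [Ring B] {n : ℕ}

/-- The left `B`-linear map `B → N` sending `b` to `b • v`. -/
def toSpan {N : Type*} [AddCommGroup N] [Module B N] (v : N) : B →ₗ[B] N where
  toFun b := b • v
  map_add' a b := add_smul a b v
  map_smul' a b := mul_smul a b v

/-- Extension of a family `s : Fin n → S` to `Fin (n+1)`, with value `1` at the last
index (which corresponds to the extra basis vector `u`). -/
def extOne (s : Fin n → S) (j : Fin (n + 1)) : S :=
  if h : (j : ℕ) < n then s ⟨j, h⟩ else 1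

/-- The degree-`l` term `FK_l` of the `φ`-Koszul complex: the free left
`S[Θ;φ]`-module on the `l`-element subsets of `{e_1, …, e_n, u}` (where `u`
corresponds to the last element of `Fin (n+1)`). -/
abbrev FK (B : Type*) [Ring B] (n l : ℕ) : Type _ :=
  {t : Finset (Fin (n + 1)) // t.card = l} →₀ B

/-- The coefficient with which the basis element `T \ {i}` occurs (up to sign) in the
image of the basis element `T` under the `φ`-Koszul differential: deleting `e_i` from a
wedge without `u` gives `x_i`; deleting `e_i` from a wedge with `u` gives `φ(x_i)`;
deleting `u` gives `Θ - s_{j_1}⋯s_{j_{l-1}}`. -/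
def coeff (sk : LeftSkewPolynomialRing S φ B) (x s : Fin n → S)
    (T : Finset (Fin (n + 1))) (i : Fin (n + 1)) : B :=
  if h : (i : ℕ) < n then
    (if Fin.last n ∈ T then sk.ι (φ (x ⟨i, h⟩)) else sk.ι (x ⟨i, h⟩))
  else sk.θ - sk.ι (∏ j ∈ T.erase (Fin.last n), extOne s j)

/-- The image of the basis element `T` under the `φ`-Koszul differential
`∂ : FK_{l+1} → FK_l`, namely `Σ_{i ∈ T} (-1)^{|{j ∈ T : j < i}|} coeff(T,i) • (T\{i})`. -/
def tgt (sk : LeftSkewPolynomialRing S φ B) (x s : Fin n → S) (l : ℕ)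
    (T : {t : Finset (Fin (n + 1)) // t.card = l + 1}) : FK B n l :=
  ∑ i ∈ T.1.attach,
    ((-1 : ℤ) ^ (T.1.filter fun j => j < i.1).card) •
      Finsupp.single
        ⟨T.1.erase i.1, by rw [Finset.card_erase_of_mem i.2, T.2]; rfl⟩
        (coeff sk x s T.1 i.1)

/-- The `φ`-Koszul differential `∂_{l+1} : FK_{l+1} → FK_l`, as a map of left
`S[Θ;φ]`-modules. -/
def FKd (sk : LeftSkewPolynomialRing S φ B) (x s : Fin n → S) (l : ℕ) :
    FK B n (l + 1) →ₗ[B] FK B n l :=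
  Finsupp.lsum ℕ fun T => toSpan (tgt sk x s l T)

end PhiKoszul

end

namespace LeftSkewPolynomialRing

variable {A : Type*} [CommRing A] {φ : A →+* A} {B : Type*} [Ring B]
  (sk : LeftSkewPolynomialRing A φ B)

theorem theta_pow_mul (a : A) (i : ℕ) : sk.θ ^ i * sk.ι a = sk.ι (φ^[i] a) * sk.θ ^ i := by
  induction i generalizing a with
  | zero => simp
  | succ i ih =>
    rw [pow_succ, mul_assoc, sk.theta_mul, ← mul_assoc, ih, ← mul_assoc,
      ← Function.iterate_succ_apply]

noncomputable def ofCoeffs : (ℕ →₀ A) →+ B :=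
  Finsupp.liftAddHom fun i => (AddMonoidHom.mulRight (sk.θ ^ i)).comp sk.ι.toAddMonoidHom

theorem ofCoeffs_apply (f : ℕ →₀ A) : sk.ofCoeffs f = f.sum fun i a => sk.ι a * sk.θ ^ i := rfl

theorem ofCoeffs_single (i : ℕ) (a : A) : sk.ofCoeffs (Finsupp.single i a) = sk.ι a * sk.θ ^ i :=
  Finsupp.liftAddHom_apply_single _ _ _

theorem ofCoeffs_injective : Function.Injective sk.ofCoeffs := sk.basis.injective

theorem ofCoeffs_surjective : Function.Surjective sk.ofCoeffs := sk.basis.surjective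

theorem ofCoeffs_mul_theta_sub (c : A) (f : ℕ →₀ A) :
    sk.ofCoeffs f * (sk.θ - sk.ι c) =
      sk.ofCoeffs (f.sum fun i a => Finsupp.single (i + 1) a - Finsupp.single i (a * φ^[i] c)) := by
  rw [map_finsuppSum, ofCoeffs_apply sk f, Finsupp.sum_mul]
  refine Finsupp.sum_congr fun i _ => ?_
  rw [map_sub, ofCoeffs_single, ofCoeffs_single, mul_sub, mul_assoc, mul_assoc, ← pow_succ,
    theta_pow_mul, ← mul_assoc, ← map_mul]

theorem eq_zero_of_mul_theta_sub_eq_zero (c : A) {b : B} (h : b * (sk.θ - sk.ι c) = 0) :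
    b = 0 := by
  obtain ⟨f, rfl⟩ := sk.ofCoeffs_surjective b
  rw [ofCoeffs_mul_theta_sub, ← map_zero sk.ofCoeffs] at h
  replace h := sk.ofCoeffs_injective h
  have h_succ (j : ℕ) : f j = f (j + 1) * φ^[j + 1] c := by
    have := congrArg (· (j + 1)) h
    simp only [Finsupp.sum_apply, Finsupp.sub_apply, Finsupp.single_apply, add_left_inj,
      Finsupp.coe_zero, Pi.zero_apply] at this
    rw [Finsupp.sum_sub, Finsupp.sum_ite_self_eq', Finsupp.sum_ite_eq', sub_eq_zero] at this
    split_ifs at this with hj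
    · exact this
    · rw [this, Finsupp.notMem_support_iff.1 hj, zero_mul]
  suffices f = 0 by rw [this, map_zero]
  by_contra hf
  set d := f.support.max' (Finsupp.support_nonempty_iff.2 hf)
  have hd : f (d + 1) = 0 := Finsupp.notMem_support_iff.1 fun hmem =>
    (f.support.le_max' _ hmem).not_gt (Nat.lt_succ_self d)
  exact Finsupp.mem_support_iff.1 (f.support.max'_mem _) (by rw [h_succ, hd, zero_mul])

end LeftSkewPolynomialRing

namespace PhiKoszul

variable {S : Type*} [CommRing S] {φ : S →+* S} {B : Type*} [Ring B] {n : ℕ}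
  (sk : LeftSkewPolynomialRing S φ B) (x s : Fin n → S)

theorem FKd_single_apply_erase (l : ℕ) (T : {t : Finset (Fin (n + 1)) // t.card = l + 1})
    (b : B) {i : Fin (n + 1)} (hi : i ∈ T.1) :
    FKd sk x s l (Finsupp.single T b)
        ⟨T.1.erase i, by rw [Finset.card_erase_of_mem hi, T.2]; rfl⟩ =
      ((-1 : ℤ) ^ (T.1.filter fun j => j < i).card) • (b * coeff sk x s T.1 i) := by
  simp only [FKd, toSpan, Finsupp.lsum_single, LinearMap.coe_mk, AddHom.coe_mk, tgt,
    Finsupp.smul_apply, Finsupp.finsetSum_apply, Finsupp.single_apply, Subtype.mk.injEq]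
  rw [Finset.sum_attach T.1 fun j => (-1 : ℤ) ^ (T.1.filter fun k => k < j).card •
      if T.1.erase j = T.1.erase i then coeff sk x s T.1 j else 0,
    Finset.sum_eq_single_of_mem i hi, if_pos rfl, smul_comm, smul_eq_mul]
  intro j hj hji
  rw [if_neg ((Finset.erase_inj _ hj).not.2 hji), smul_zero]

theorem coeff_last (T : Finset (Fin (n + 1))) :
    coeff sk x s T (Fin.last n) = sk.θ - sk.ι (∏ j ∈ T.erase (Fin.last n), extOne s j) := by
  simp [coeff]

theorem FK_top_eq_single (T : {t : Finset (Fin (n + 1)) // t.card = n + 1})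
    (f : FK B n (n + 1)) : f = Finsupp.single T (f T) := by
  have h_unique (T' : {t : Finset (Fin (n + 1)) // t.card = n + 1}) : T' = T :=
    Subtype.ext <| (Finset.eq_univ_of_card _ (by simp [T'.2])).trans
      (Finset.eq_univ_of_card _ (by simp [T.2])).symm
  ext T'
  rw [h_unique T', Finsupp.single_eq_same]

end PhiKoszul

open PhiKoszul MvPolynomial

theorem phiKoszul_top_differential_injective_general
    {K : Type*} [CommRing K] {n : ℕ}
    (φ : MvPolynomial (Fin n) K →ₐ[K] MvPolynomial (Fin n) K)
    (s : Fin n → MvPolynomial (Fin n) K)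
    {B : Type*} [Ring B]
    (sk : LeftSkewPolynomialRing (MvPolynomial (Fin n) K)
      (φ : MvPolynomial (Fin n) K →+* MvPolynomial (Fin n) K) B) :
    Function.Injective (FKd sk X s n) := by
  rw [injective_iff_map_eq_zero]
  intro f hf
  set T : {t : Finset (Fin (n + 1)) // t.card = n + 1} := ⟨Finset.univ, by simp⟩
  rw [FK_top_eq_single T f] at hf ⊢
  have hu := FKd_single_apply_erase sk X s n T (f T) (Finset.mem_univ (Fin.last n))
  rw [hf, Finsupp.coe_zero, Pi.zero_apply, eq_comm, ((isUnit_neg_one (α := ℤ)).pow _).smul_eq_zero,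
    coeff_last] at hu
  rw [sk.eq_zero_of_mul_theta_sub_eq_zero _ hu, Finsupp.single_zero]

/-- Let `K` be a commutative ring, `S = K[x_1,…,x_n]`, and `φ : S → S` a flat
`K`-algebra homomorphism with `φ(x_i) = s_i·x_i`.  Then the top differential
`∂_{n+1} : FK_{n+1} → FK_n` of the `φ`-Koszul chain complex is injective; equivalently,
`H_{n+1}(FK_•(x_1,…,x_n)) = 0`. -/
theorem phiKoszul_top_differential_injective
    {K : Type*} [CommRing K] {n : ℕ}
    (φ : MvPolynomial (Fin n) K →ₐ[K] MvPolynomial (Fin n) K)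
    (hflat : (φ : MvPolynomial (Fin n) K →+* MvPolynomial (Fin n) K).Flat)
    (s : Fin n → MvPolynomial (Fin n) K)
    (hs : ∀ i, φ (X i) = s i * X i)
    {B : Type*} [Ring B]
    (sk : LeftSkewPolynomialRing (MvPolynomial (Fin n) K)
      (φ : MvPolynomial (Fin n) K →+* MvPolynomial (Fin n) K) B) :
    Function.Injective (FKd sk X s n) :=
  phiKoszul_top_differential_injective_general φ s sk
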